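/- Let s > -3/4, k ≥ 0, and suppose k - s > 2. Then the bilinear estimate ‖uv‖_{X^{k,b'}} ≲ ‖u‖_{X^{k,b}}·‖v‖_{Y^{s,b}} fails for b = 1/2⁺ and b' = (-1/2)⁺. More precisely, with h₁(τ₁,ξ₁) = 𝟙_{[0,1]}(ξ₁)𝟙_{[0,1]}(τ₁), h₂(τ₂,ξ₂) = 𝟙_{[N,N+1]}(ξ₂)𝟙_{[N²,N²+1]}(τ₂), h(τ,ξ) = 𝟙_{[N,N+1]}(ξ)𝟙_{[N²,N²+1]}(τ), the dualized bilinear form is bounded below by c·N^{b'-3b+k-s}, which tends to infinity as N → ∞ when b' - 3b + k - s > 0. -/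

import Mathlib

open MeasureTheory

/-- Japanese bracket `⟨x⟩ = (1 + x²)^{1/2}`. -/
noncomputable def jap (x : ℝ) : ℝ := Real.sqrt (1 + x ^ 2)

/-- Indicator (as a real-valued function) of the interval `[a, b]`. -/
noncomputable def ind (a b x : ℝ) : ℝ := Set.indicator (Set.Icc a b) 1 x

lemma jap_pos (x : ℝ) : 0 < jap x := Real.sqrt_pos.mpr (by positivity)

lemma one_le_jap (x : ℝ) : 1 ≤ jap x := by
  have h := Real.sqrt_le_sqrt (show (1:ℝ) ≤ 1 + x ^ 2 by nlinarith [sq_nonneg x])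
  rwa [Real.sqrt_one] at h

lemma abs_le_jap (x : ℝ) : |x| ≤ jap x := by
  calc |x| = Real.sqrt (x ^ 2) := (Real.sqrt_sq_eq_abs x).symm
  _ ≤ jap x := Real.sqrt_le_sqrt (by linarith)

lemma jap_le (x : ℝ) : jap x ≤ 1 + |x| := by
  calc jap x ≤ Real.sqrt ((1 + |x|) ^ 2) :=
        Real.sqrt_le_sqrt (by nlinarith [abs_nonneg x, sq_abs x])
  _ = 1 + |x| := Real.sqrt_sq (by positivity)

lemma ind_nonneg (a b x : ℝ) : 0 ≤ ind a b x :=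
  Set.indicator_nonneg (fun _ _ => zero_le_one) x

lemma ind_le_one (a b x : ℝ) : ind a b x ≤ 1 := by
  unfold ind
  by_cases h : x ∈ Set.Icc a b
  · simp [Set.indicator_of_mem h]
  · simp [Set.indicator_of_notMem h]

lemma ind_of_mem {a b x : ℝ} (h : x ∈ Set.Icc a b) : ind a b x = 1 := by
  simp [ind, Set.indicator_of_mem h]

lemma ind_of_not_mem {a b x : ℝ} (h : x ∉ Set.Icc a b) : ind a b x = 0 := by
  simp [ind, Set.indicator_of_notMem h]

lemma rpow_lb {L U x : ℝ} (hL : 0 < L) (h1 : L ≤ x) (h2 : x ≤ U) (e : ℝ) :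
    min (L ^ e) (U ^ e) ≤ x ^ e := by
  rcases le_or_gt 0 e with he | he
  · exact le_trans (min_le_left _ _) (Real.rpow_le_rpow hL.le h1 he)
  · exact le_trans (min_le_right _ _)
      (Real.rpow_le_rpow_of_nonpos (hL.trans_le h1) h2 he.le)

lemma rpow_ub {L U x : ℝ} (hL : 0 < L) (h1 : L ≤ x) (h2 : x ≤ U) (e : ℝ) :
    x ^ e ≤ max (L ^ e) (U ^ e) := by
  rcases le_or_gt 0 e with he | he
  · exact le_trans (Real.rpow_le_rpow (hL.le.trans h1) h2 he) (le_max_right _ _)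
  · exact le_trans (Real.rpow_le_rpow_of_nonpos hL h1 he.le) (le_max_left _ _)

/-- Upper bound for `jap x ^ e` when `jap x ≤ B`. -/
lemma jap_rpow_ub {x B : ℝ} (hB : jap x ≤ B) (e : ℝ) :
    jap x ^ e ≤ max 1 (B ^ e) := by
  have h := rpow_ub one_pos (one_le_jap x) hB e
  simpa using h

lemma jap_rpow_lb {x B : ℝ} (hB : jap x ≤ B) (e : ℝ) :
    min 1 (B ^ e) ≤ jap x ^ e := by
  have h := rpow_lb one_pos (one_le_jap x) hB e
  simpa using h

lemma continuous_jap : Continuous jap := by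
  unfold jap
  exact Real.continuous_sqrt.comp (by continuity)

lemma measurable_ind (a b : ℝ) : Measurable (ind a b) :=
  Measurable.indicator measurable_const measurableSet_Icc

/-- The full integrand. -/
noncomputable def Fint (s k b b' N : ℝ) (q : ℝ × ℝ × ℝ × ℝ) : ℝ :=
  (jap q.2.1 ^ k * jap (q.1 - q.2.1 ^ 2) ^ b' *
      (ind N (N + 1) q.2.1 * ind (N ^ 2) (N ^ 2 + 1) q.1) *
      (ind 0 1 q.2.2.2 * ind 0 1 q.2.2.1) *
      (ind N (N + 1) (q.2.1 - q.2.2.2) *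
        ind (N ^ 2) (N ^ 2 + 1) (q.1 - q.2.2.1))) /
    (jap q.2.2.2 ^ k * jap (q.2.2.1 - q.2.2.2 ^ 2) ^ b *
      jap (q.2.1 - q.2.2.2) ^ s *
      jap ((q.1 - q.2.2.1) + (q.2.1 - q.2.2.2) ^ 3) ^ b)

lemma Fint_nonneg (s k b b' N : ℝ) (q : ℝ × ℝ × ℝ × ℝ) : 0 ≤ Fint s k b b' N q := by
  unfold Fint
  apply div_nonneg
  · have i1 := ind_nonneg N (N+1) q.2.1
    have i2 := ind_nonneg (N^2) (N^2+1) q.1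
    have i3 := ind_nonneg 0 1 q.2.2.2
    have i4 := ind_nonneg 0 1 q.2.2.1
    have i5 := ind_nonneg N (N+1) (q.2.1 - q.2.2.2)
    have i6 := ind_nonneg (N^2) (N^2+1) (q.1 - q.2.2.1)
    have h1 : (0:ℝ) ≤ jap q.2.1 ^ k := (Real.rpow_pos_of_pos (jap_pos _) _).le
    have h2 : (0:ℝ) ≤ jap (q.1 - q.2.1 ^ 2) ^ b' := (Real.rpow_pos_of_pos (jap_pos _) _).le
    positivity
  · have h1 : (0:ℝ) ≤ jap q.2.2.2 ^ k := (Real.rpow_pos_of_pos (jap_pos _) _).le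
    have h2 : (0:ℝ) ≤ jap (q.2.2.1 - q.2.2.2 ^ 2) ^ b := (Real.rpow_pos_of_pos (jap_pos _) _).le
    have h3 : (0:ℝ) ≤ jap (q.2.1 - q.2.2.2) ^ s := (Real.rpow_pos_of_pos (jap_pos _) _).le
    have h4 : (0:ℝ) ≤ jap ((q.1 - q.2.2.1) + (q.2.1 - q.2.2.2) ^ 3) ^ b :=
      (Real.rpow_pos_of_pos (jap_pos _) _).le
    positivity

lemma Fint_measurable (s k b b' N : ℝ) : Measurable (Fint s k b b' N) := by
  unfold Fint
  have hτ : Measurable fun q : ℝ × ℝ × ℝ × ℝ => q.1 := measurable_fst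
  have hξ : Measurable fun q : ℝ × ℝ × ℝ × ℝ => q.2.1 := measurable_fst.comp measurable_snd
  have hτ₁ : Measurable fun q : ℝ × ℝ × ℝ × ℝ => q.2.2.1 :=
    measurable_fst.comp (measurable_snd.comp measurable_snd)
  have hξ₁ : Measurable fun q : ℝ × ℝ × ℝ × ℝ => q.2.2.2 :=
    measurable_snd.comp (measurable_snd.comp measurable_snd)
  have hrpow : ∀ (e : ℝ) {g : ℝ × ℝ × ℝ × ℝ → ℝ}, Measurable g →
      Measurable fun q => jap (g q) ^ e := by
    intro e g hg
    have hc : Continuous fun x : ℝ => jap x ^ e :=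
      Continuous.rpow_const continuous_jap (fun x => Or.inl (jap_pos x).ne')
    exact hc.measurable.comp hg
  have hind : ∀ (a c : ℝ) {g : ℝ × ℝ × ℝ × ℝ → ℝ}, Measurable g →
      Measurable fun q => ind a c (g q) := fun a c g hg => (measurable_ind a c).comp hg
  exact Measurable.div
    (((((hrpow k hξ).mul (hrpow b' (hτ.sub (hξ.pow_const 2)))).mul
        ((hind N (N+1) hξ).mul (hind (N^2) (N^2+1) hτ))).mul
        ((hind 0 1 hξ₁).mul (hind 0 1 hτ₁))).mul
        ((hind N (N+1) (hξ.sub hξ₁)).mul (hind (N^2) (N^2+1) (hτ.sub hτ₁))))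
    ((((hrpow k hξ₁).mul (hrpow b (hτ₁.sub (hξ₁.pow_const 2)))).mul
        (hrpow s (hξ.sub hξ₁))).mul
        (hrpow b ((hτ.sub hτ₁).add ((hξ.sub hξ₁).pow_const 3))))

set_option maxHeartbeats 1000000 in
/-- Integrability of the integrand. -/
lemma Fint_integrable (s k b b' N : ℝ) (hN : 2 ≤ N) :
    Integrable (Fint s k b b' N) := by
  have hN0 : (0:ℝ) < N := by linarith
  set T : Set (ℝ × ℝ × ℝ × ℝ) :=
    Set.Icc (N^2) (N^2+1) ×ˢ Set.Icc N (N+1) ×ˢ Set.Icc (0:ℝ) 1 ×ˢ Set.Icc (0:ℝ) 1 with hT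
  set J : ℝ := (N+1)^3 + 3*N^2 + 3 with hJdef
  have hJ1 : (1:ℝ) ≤ J := by rw [hJdef]; nlinarith
  have hJ0 : (0:ℝ) < J := by linarith
  have hJlin : 2*N + 2 ≤ J := by rw [hJdef]; nlinarith
  have hJbig : N^2 + 2 + (N+1)^3 ≤ J := by rw [hJdef]; nlinarith
  have hm1 : (0:ℝ) < min 1 (J ^ k) := lt_min one_pos (Real.rpow_pos_of_pos hJ0 _)
  have hm2 : (0:ℝ) < min 1 (J ^ b) := lt_min one_pos (Real.rpow_pos_of_pos hJ0 _)
  have hm3 : (0:ℝ) < min 1 (J ^ s) := lt_min one_pos (Real.rpow_pos_of_pos hJ0 _)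
  have hdpos : (0:ℝ) < min 1 (J ^ k) * min 1 (J ^ b) * min 1 (J ^ s) * min 1 (J ^ b) :=
    mul_pos (mul_pos (mul_pos hm1 hm2) hm3) hm2
  have hnpos : (0:ℝ) ≤ max 1 (J ^ k) * max 1 (J ^ b') :=
    mul_nonneg (le_trans zero_le_one (le_max_left _ _))
      (le_trans zero_le_one (le_max_left _ _))
  set M : ℝ := (max 1 (J ^ k) * max 1 (J ^ b')) /
      (min 1 (J ^ k) * min 1 (J ^ b) * min 1 (J ^ s) * min 1 (J ^ b)) with hM
  have hTmeas : MeasurableSet T :=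
    (measurableSet_Icc.prod (measurableSet_Icc.prod
      (measurableSet_Icc.prod measurableSet_Icc)))
  have hTfin : volume T < ⊤ :=
    (isCompact_Icc.prod (isCompact_Icc.prod
      (isCompact_Icc.prod isCompact_Icc))).measure_lt_top
  apply Integrable.mono' (g := T.indicator fun _ => M)
  · exact (integrable_indicator_iff hTmeas).2 (integrableOn_const hTfin.ne)
  · exact (Fint_measurable s k b b' N).aestronglyMeasurable
  · refine Filter.Eventually.of_forall fun q => ?_
    rw [Real.norm_eq_abs, abs_of_nonneg (Fint_nonneg s k b b' N q)]
    by_cases hq : q ∈ T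
    · rw [Set.indicator_of_mem hq]
      obtain ⟨τ, ξ, τ₁, ξ₁⟩ := q
      simp only [hT, Set.mem_prod, Set.mem_Icc] at hq
      obtain ⟨⟨hτ1, hτ2⟩, ⟨hξ1, hξ2⟩, ⟨ht1, ht2⟩, ⟨hx1, hx2⟩⟩ := hq
      -- bounds on the brackets
      have bξ : jap ξ ≤ J := by
        have habs : |ξ| ≤ N + 1 := abs_le.mpr ⟨by linarith, hξ2⟩
        linarith [jap_le ξ]
      have bτξ : jap (τ - ξ ^ 2) ≤ J := by
        have habs : |τ - ξ ^ 2| ≤ 2*N + 1 := abs_le.mpr ⟨by nlinarith, by nlinarith⟩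
        linarith [jap_le (τ - ξ ^ 2)]
      have bξ₁ : jap ξ₁ ≤ J := by
        have habs : |ξ₁| ≤ 1 := abs_le.mpr ⟨by linarith, hx2⟩
        linarith [jap_le ξ₁]
      have bτ₁ : jap (τ₁ - ξ₁ ^ 2) ≤ J := by
        have habs : |τ₁ - ξ₁ ^ 2| ≤ 1 := abs_le.mpr ⟨by nlinarith, by nlinarith⟩
        linarith [jap_le (τ₁ - ξ₁ ^ 2)]
      have bξξ₁ : jap (ξ - ξ₁) ≤ J := by
        have habs : |ξ - ξ₁| ≤ N + 1 := abs_le.mpr ⟨by nlinarith, by nlinarith⟩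
        linarith [jap_le (ξ - ξ₁)]
      have bbig : jap ((τ - τ₁) + (ξ - ξ₁) ^ 3) ≤ J := by
        have hcube : (ξ - ξ₁) ^ 3 ≤ (N+1) ^ 3 :=
          pow_le_pow_left₀ (by nlinarith) (by nlinarith) 3
        have hcube0 : (0:ℝ) ≤ (ξ - ξ₁) ^ 3 := pow_nonneg (by nlinarith) 3
        have habs : |(τ - τ₁) + (ξ - ξ₁) ^ 3| ≤ N^2 + 1 + (N+1)^3 :=
          abs_le.mpr ⟨by nlinarith, by nlinarith⟩
        linarith [jap_le ((τ - τ₁) + (ξ - ξ₁) ^ 3)]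
      -- numerator bound
      have hnum : (jap ξ ^ k * jap (τ - ξ ^ 2) ^ b' *
          (ind N (N + 1) ξ * ind (N ^ 2) (N ^ 2 + 1) τ) *
          (ind 0 1 ξ₁ * ind 0 1 τ₁) *
          (ind N (N + 1) (ξ - ξ₁) * ind (N ^ 2) (N ^ 2 + 1) (τ - τ₁))) ≤
          max 1 (J ^ k) * max 1 (J ^ b') := by
        have hp1 : ind N (N + 1) ξ * ind (N ^ 2) (N ^ 2 + 1) τ ≤ 1 :=
          mul_le_one₀ (ind_le_one _ _ _) (ind_nonneg _ _ _) (ind_le_one _ _ _)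
        have hp1n : (0:ℝ) ≤ ind N (N + 1) ξ * ind (N ^ 2) (N ^ 2 + 1) τ :=
          mul_nonneg (ind_nonneg _ _ _) (ind_nonneg _ _ _)
        have hp2 : ind 0 1 ξ₁ * ind 0 1 τ₁ ≤ 1 :=
          mul_le_one₀ (ind_le_one _ _ _) (ind_nonneg _ _ _) (ind_le_one _ _ _)
        have hp2n : (0:ℝ) ≤ ind 0 1 ξ₁ * ind 0 1 τ₁ :=
          mul_nonneg (ind_nonneg _ _ _) (ind_nonneg _ _ _)
        have hp3 : ind N (N + 1) (ξ - ξ₁) * ind (N ^ 2) (N ^ 2 + 1) (τ - τ₁) ≤ 1 :=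
          mul_le_one₀ (ind_le_one _ _ _) (ind_nonneg _ _ _) (ind_le_one _ _ _)
        have hp3n : (0:ℝ) ≤ ind N (N + 1) (ξ - ξ₁) * ind (N ^ 2) (N ^ 2 + 1) (τ - τ₁) :=
          mul_nonneg (ind_nonneg _ _ _) (ind_nonneg _ _ _)
        have h12 : jap ξ ^ k * jap (τ - ξ ^ 2) ^ b' ≤ max 1 (J ^ k) * max 1 (J ^ b') :=
          mul_le_mul (jap_rpow_ub bξ k) (jap_rpow_ub bτξ b')
            (Real.rpow_pos_of_pos (jap_pos _) _).le
            (le_trans zero_le_one (le_max_left _ _))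
        calc jap ξ ^ k * jap (τ - ξ ^ 2) ^ b' *
              (ind N (N + 1) ξ * ind (N ^ 2) (N ^ 2 + 1) τ) *
              (ind 0 1 ξ₁ * ind 0 1 τ₁) *
              (ind N (N + 1) (ξ - ξ₁) * ind (N ^ 2) (N ^ 2 + 1) (τ - τ₁))
            ≤ (max 1 (J ^ k) * max 1 (J ^ b')) * 1 * 1 * 1 := by
              apply mul_le_mul _ hp3 hp3n (by nlinarith [hnpos])
              apply mul_le_mul _ hp2 hp2n (by nlinarith [hnpos])
              exact mul_le_mul h12 hp1 hp1n hnpos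
          _ = max 1 (J ^ k) * max 1 (J ^ b') := by ring
      -- denominator bound
      have hden : min 1 (J ^ k) * min 1 (J ^ b) * min 1 (J ^ s) * min 1 (J ^ b) ≤
          jap ξ₁ ^ k * jap (τ₁ - ξ₁ ^ 2) ^ b * jap (ξ - ξ₁) ^ s *
            jap ((τ - τ₁) + (ξ - ξ₁) ^ 3) ^ b := by
        have r1 : (0:ℝ) ≤ jap ξ₁ ^ k := (Real.rpow_pos_of_pos (jap_pos _) _).le
        have r2 : (0:ℝ) ≤ jap (τ₁ - ξ₁ ^ 2) ^ b := (Real.rpow_pos_of_pos (jap_pos _) _).le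
        have r3 : (0:ℝ) ≤ jap (ξ - ξ₁) ^ s := (Real.rpow_pos_of_pos (jap_pos _) _).le
        apply mul_le_mul _ (jap_rpow_lb bbig b) hm2.le
          (mul_nonneg (mul_nonneg r1 r2) r3)
        apply mul_le_mul _ (jap_rpow_lb bξξ₁ s) hm3.le (mul_nonneg r1 r2)
        exact mul_le_mul (jap_rpow_lb bξ₁ k) (jap_rpow_lb bτ₁ b) hm2.le r1
      calc Fint s k b b' N (τ, ξ, τ₁, ξ₁)
          ≤ (max 1 (J ^ k) * max 1 (J ^ b')) /
            (min 1 (J ^ k) * min 1 (J ^ b) * min 1 (J ^ s) * min 1 (J ^ b)) :=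
            div_le_div₀ hnpos hnum hdpos hden
        _ = M := hM.symm
    · rw [Set.indicator_of_notMem hq]
      obtain ⟨τ, ξ, τ₁, ξ₁⟩ := q
      simp only [hT, Set.mem_prod, not_and_or] at hq
      have hz : Fint s k b b' N (τ, ξ, τ₁, ξ₁) = 0 := by
        rcases hq with h | h | h | h <;>
          (unfold Fint; simp [ind_of_not_mem h])
      rw [hz]

set_option maxHeartbeats 1000000 in
/-- The key pointwise lower bound on the small box. -/
lemma Fint_key (s k b b' N : ℝ) (hk : 0 ≤ k) (hN : 2 ≤ N)
    (q : ℝ × ℝ × ℝ × ℝ)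
    (hq : q ∈ Set.Icc (N^2+1/2) (N^2+1) ×ˢ Set.Icc (N+1/2) (N+1) ×ˢ
          Set.Icc (0:ℝ) (1/4) ×ˢ Set.Icc (0:ℝ) (1/4)) :
    (min ((1/2:ℝ) ^ b') ((3:ℝ) ^ b') /
      ((2:ℝ) ^ k * max 1 ((2:ℝ) ^ b) * max 1 ((3:ℝ) ^ s) * max 1 ((11:ℝ) ^ b))) *
      N ^ (b' - 3 * b + k - s) ≤ Fint s k b b' N q := by
  obtain ⟨τ, ξ, τ₁, ξ₁⟩ := q
  simp only [Set.mem_prod, Set.mem_Icc] at hq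
  obtain ⟨⟨hτ1, hτ2⟩, ⟨hξ1, hξ2⟩, ⟨ht1, ht2⟩, ⟨hx1, hx2⟩⟩ := hq
  have hN0 : (0:ℝ) < N := by linarith
  -- abbreviations
  set m₁ : ℝ := min ((1/2:ℝ) ^ b') ((3:ℝ) ^ b') with hm₁def
  have hm₁pos : 0 < m₁ :=
    lt_min (Real.rpow_pos_of_pos (by norm_num) _) (Real.rpow_pos_of_pos (by norm_num) _)
  have hmax2 : (0:ℝ) < max 1 ((2:ℝ) ^ b) := lt_of_lt_of_le one_pos (le_max_left _ _)
  have hmax3 : (0:ℝ) < max 1 ((3:ℝ) ^ s) := lt_of_lt_of_le one_pos (le_max_left _ _)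
  have hmax11 : (0:ℝ) < max 1 ((11:ℝ) ^ b) := lt_of_lt_of_le one_pos (le_max_left _ _)
  have h2k : (0:ℝ) < (2:ℝ) ^ k := Real.rpow_pos_of_pos (by norm_num) _
  have hKpos : (0:ℝ) < (2:ℝ) ^ k * max 1 ((2:ℝ) ^ b) * max 1 ((3:ℝ) ^ s) * max 1 ((11:ℝ) ^ b) :=
    mul_pos (mul_pos (mul_pos h2k hmax2) hmax3) hmax11
  -- numerator lower bounds
  have jξ : N ≤ jap ξ := le_trans (by linarith)
    (le_trans (le_abs_self ξ) (abs_le_jap ξ))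
  have h_a : N ^ k ≤ jap ξ ^ k := Real.rpow_le_rpow hN0.le jξ hk
  have hlow : N/2 ≤ jap (τ - ξ^2) := by
    have h1 : N/2 ≤ -(τ - ξ^2) := by nlinarith
    have h2 : -(τ - ξ^2) ≤ |τ - ξ^2| := neg_le_abs _
    linarith [abs_le_jap (τ - ξ^2)]
  have hup : jap (τ - ξ^2) ≤ 3*N := by
    have habs : |τ - ξ^2| ≤ 2*N + 1/2 := abs_le.mpr ⟨by nlinarith, by nlinarith⟩
    nlinarith [jap_le (τ - ξ^2)]
  have h_b : N ^ b' * m₁ ≤ jap (τ - ξ^2) ^ b' := by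
    have hmm := rpow_lb (show (0:ℝ) < N/2 by linarith) hlow hup b'
    have e1 : ((N:ℝ)/2) ^ b' = N ^ b' * (1/2 : ℝ) ^ b' := by
      rw [show (N:ℝ)/2 = N * (1/2) by ring, Real.mul_rpow hN0.le (by norm_num)]
    have e2 : ((3:ℝ)*N) ^ b' = N ^ b' * (3 : ℝ) ^ b' := by
      rw [mul_comm, ← Real.mul_rpow hN0.le (by norm_num)]
    have hNb' : (0:ℝ) ≤ N ^ b' := (Real.rpow_pos_of_pos hN0 _).le
    calc N ^ b' * m₁ = min (N ^ b' * (1/2:ℝ) ^ b') (N ^ b' * (3:ℝ) ^ b') :=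
          mul_min_of_nonneg _ _ hNb'
      _ = min ((N/2) ^ b') ((3*N) ^ b') := by rw [e1, e2]
      _ ≤ jap (τ - ξ^2) ^ b' := hmm
  -- denominator upper bounds
  have d1 : jap ξ₁ ^ k ≤ (2:ℝ) ^ k := by
    apply Real.rpow_le_rpow (jap_pos _).le _ hk
    have habs : |ξ₁| ≤ 1/4 := abs_le.mpr ⟨by linarith, hx2⟩
    nlinarith [jap_le ξ₁]
  have d2 : jap (τ₁ - ξ₁^2) ^ b ≤ max 1 ((2:ℝ) ^ b) := by
    apply jap_rpow_ub
    have habs : |τ₁ - ξ₁^2| ≤ 1 := abs_le.mpr ⟨by nlinarith, by nlinarith⟩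
    nlinarith [jap_le (τ₁ - ξ₁^2)]
  have d3 : jap (ξ - ξ₁) ^ s ≤ N ^ s * max 1 ((3:ℝ) ^ s) := by
    have hl : N ≤ jap (ξ - ξ₁) := by
      have h1 : N ≤ ξ - ξ₁ := by linarith
      exact le_trans h1 (le_trans (le_abs_self _) (abs_le_jap _))
    have hu : jap (ξ - ξ₁) ≤ 3*N := by
      have habs : |ξ - ξ₁| ≤ N + 1 := abs_le.mpr ⟨by nlinarith, by nlinarith⟩
      nlinarith [jap_le (ξ - ξ₁)]
    have := rpow_ub hN0 hl hu s
    have e2 : ((3:ℝ)*N) ^ s = N ^ s * (3 : ℝ) ^ s := by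
      rw [mul_comm, ← Real.mul_rpow hN0.le (by norm_num)]
    have hNs : (0:ℝ) ≤ N ^ s := (Real.rpow_pos_of_pos hN0 _).le
    calc jap (ξ - ξ₁) ^ s ≤ max (N ^ s) ((3*N) ^ s) := this
      _ = max (N ^ s * 1) (N ^ s * (3:ℝ) ^ s) := by rw [e2, mul_one]
      _ = N ^ s * max 1 ((3:ℝ) ^ s) := (mul_max_of_nonneg _ _ hNs).symm
  have d4 : jap ((τ - τ₁) + (ξ - ξ₁)^3) ^ b ≤ N ^ (3*b) * max 1 ((11:ℝ) ^ b) := by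
    have hNc : (0:ℝ) < N^(3:ℕ) := by positivity
    have hcube : (N:ℝ)^(3:ℕ) ≤ (ξ - ξ₁)^3 := pow_le_pow_left₀ hN0.le (by linarith) 3
    have hl : (N:ℝ)^(3:ℕ) ≤ jap ((τ - τ₁) + (ξ - ξ₁)^3) := by
      have h1 : (N:ℝ)^(3:ℕ) ≤ (τ - τ₁) + (ξ - ξ₁)^3 := by nlinarith
      exact le_trans h1 (le_trans (le_abs_self _) (abs_le_jap _))
    have hu : jap ((τ - τ₁) + (ξ - ξ₁)^3) ≤ 11 * N^(3:ℕ) := by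
      have hcube2 : (ξ - ξ₁)^3 ≤ (N+1)^3 := pow_le_pow_left₀ (by linarith) (by linarith) 3
      have hcube0 : (0:ℝ) ≤ (ξ - ξ₁)^3 := pow_nonneg (by linarith) 3
      have habs : |(τ - τ₁) + (ξ - ξ₁)^3| ≤ N^2 + 1 + (N+1)^3 :=
        abs_le.mpr ⟨by nlinarith, by nlinarith⟩
      nlinarith [jap_le ((τ - τ₁) + (ξ - ξ₁)^3)]
    have hmm := rpow_ub hNc hl hu b
    have e3 : ((N:ℝ)^(3:ℕ)) ^ b = N ^ (3*b) := by
      rw [← Real.rpow_natCast N 3, ← Real.rpow_mul hN0.le]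
      norm_num
    have e4 : ((11:ℝ) * N^(3:ℕ)) ^ b = N ^ (3*b) * (11:ℝ) ^ b := by
      rw [mul_comm (11:ℝ), ← e3, ← Real.mul_rpow (by positivity) (by norm_num)]
    have hN3b : (0:ℝ) ≤ N ^ (3*b) := (Real.rpow_pos_of_pos hN0 _).le
    calc jap ((τ - τ₁) + (ξ - ξ₁)^3) ^ b
        ≤ max ((N^(3:ℕ)) ^ b) ((11 * N^(3:ℕ)) ^ b) := hmm
      _ = max (N ^ (3*b) * 1) (N ^ (3*b) * (11:ℝ) ^ b) := by rw [e3, e4, mul_one]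
      _ = N ^ (3*b) * max 1 ((11:ℝ) ^ b) := (mul_max_of_nonneg _ _ hN3b).symm
  -- indicators are 1 on the box
  have i1 : ind N (N+1) ξ = 1 := ind_of_mem (Set.mem_Icc.mpr ⟨by linarith, hξ2⟩)
  have i2 : ind (N^2) (N^2+1) τ = 1 := ind_of_mem (Set.mem_Icc.mpr ⟨by linarith, hτ2⟩)
  have i3 : ind 0 1 ξ₁ = 1 := ind_of_mem (Set.mem_Icc.mpr ⟨hx1, by linarith⟩)
  have i4 : ind 0 1 τ₁ = 1 := ind_of_mem (Set.mem_Icc.mpr ⟨ht1, by linarith⟩)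
  have i5 : ind N (N+1) (ξ - ξ₁) = 1 := ind_of_mem (Set.mem_Icc.mpr ⟨by linarith, by linarith⟩)
  have i6 : ind (N^2) (N^2+1) (τ - τ₁) = 1 :=
    ind_of_mem (Set.mem_Icc.mpr ⟨by linarith, by linarith⟩)
  have hFeq : Fint s k b b' N (τ, ξ, τ₁, ξ₁) =
      (jap ξ ^ k * jap (τ - ξ^2) ^ b') /
        (jap ξ₁ ^ k * jap (τ₁ - ξ₁^2) ^ b * jap (ξ - ξ₁) ^ s *
          jap ((τ - τ₁) + (ξ - ξ₁)^3) ^ b) := by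
    unfold Fint
    dsimp only
    rw [i1, i2, i3, i4, i5, i6]
    ring
  rw [hFeq]
  -- denominator positivity
  have r1 : (0:ℝ) < jap ξ₁ ^ k := Real.rpow_pos_of_pos (jap_pos _) _
  have r2 : (0:ℝ) < jap (τ₁ - ξ₁^2) ^ b := Real.rpow_pos_of_pos (jap_pos _) _
  have r3 : (0:ℝ) < jap (ξ - ξ₁) ^ s := Real.rpow_pos_of_pos (jap_pos _) _
  have r4 : (0:ℝ) < jap ((τ - τ₁) + (ξ - ξ₁)^3) ^ b := Real.rpow_pos_of_pos (jap_pos _) _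
  have hdenpos : (0:ℝ) < jap ξ₁ ^ k * jap (τ₁ - ξ₁^2) ^ b * jap (ξ - ξ₁) ^ s *
      jap ((τ - τ₁) + (ξ - ξ₁)^3) ^ b := mul_pos (mul_pos (mul_pos r1 r2) r3) r4
  have hNs : (0:ℝ) < N ^ s := Real.rpow_pos_of_pos hN0 _
  have hN3b : (0:ℝ) < N ^ (3*b) := Real.rpow_pos_of_pos hN0 _
  have hNk : (0:ℝ) < N ^ k := Real.rpow_pos_of_pos hN0 _
  have hNb' : (0:ℝ) < N ^ b' := Real.rpow_pos_of_pos hN0 _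
  have hDU : (0:ℝ) < (2:ℝ) ^ k * max 1 ((2:ℝ) ^ b) *
      (N ^ s * max 1 ((3:ℝ) ^ s)) * (N ^ (3*b) * max 1 ((11:ℝ) ^ b)) :=
    mul_pos (mul_pos (mul_pos h2k hmax2) (mul_pos hNs hmax3)) (mul_pos hN3b hmax11)
  -- combine
  have hpow : N ^ k * N ^ b' = N ^ (b' - 3 * b + k - s) * (N ^ s * N ^ (3*b)) := by
    rw [← Real.rpow_add hN0, ← Real.rpow_add hN0, ← Real.rpow_add hN0]
    congr 1
    ring
  have heq : (m₁ / ((2:ℝ) ^ k * max 1 ((2:ℝ) ^ b) * max 1 ((3:ℝ) ^ s) * max 1 ((11:ℝ) ^ b))) *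
      N ^ (b' - 3 * b + k - s) =
      (N ^ k * (N ^ b' * m₁)) /
        ((2:ℝ) ^ k * max 1 ((2:ℝ) ^ b) * (N ^ s * max 1 ((3:ℝ) ^ s)) *
          (N ^ (3*b) * max 1 ((11:ℝ) ^ b))) := by
    rw [div_mul_eq_mul_div, div_eq_div_iff hKpos.ne' hDU.ne']
    linear_combination (-(m₁ * ((2:ℝ) ^ k * max 1 ((2:ℝ) ^ b) * max 1 ((3:ℝ) ^ s) *
      max 1 ((11:ℝ) ^ b)))) * hpow
  rw [heq]
  have hnumnn : (0:ℝ) ≤ jap ξ ^ k * jap (τ - ξ^2) ^ b' :=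
    mul_nonneg (Real.rpow_pos_of_pos (jap_pos _) _).le
      (Real.rpow_pos_of_pos (jap_pos _) _).le
  refine div_le_div₀ hnumnn ?_ hdenpos ?_
  · exact mul_le_mul h_a h_b (mul_nonneg hNb'.le hm₁pos.le)
      (Real.rpow_pos_of_pos (jap_pos _) _).le
  · apply mul_le_mul _ d4 r4.le
      (mul_nonneg (mul_nonneg h2k.le hmax2.le) (mul_nonneg hNs.le hmax3.le))
    apply mul_le_mul _ d3 r3.le (mul_nonneg h2k.le hmax2.le)
    exact mul_le_mul d1 d2 r2.le h2k.le

set_option maxHeartbeats 1000000 in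
/-- Corollary 4.5: the dualized bilinear form with the localized test functions
`h₁ = 𝟙_{[0,1]}(ξ₁)𝟙_{[0,1]}(τ₁)`, `h₂ = 𝟙_{[N,N+1]}(ξ₂)𝟙_{[N²,N²+1]}(τ₂)`,
`h = 𝟙_{[N,N+1]}(ξ)𝟙_{[N²,N²+1]}(τ)` is bounded below by `c·N^{b'-3b+k-s}`,
which tends to infinity as `N → ∞` when `b' - 3b + k - s > 0`
(failure of the bilinear estimate for `k - s > 2`). -/
theorem bilinear_estimate_fails_ks_gt_two (s k b b' : ℝ)
    (hs : -3 / 4 < s) (hk : 0 ≤ k) (hks : 2 < k - s) :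
    ∃ c : ℝ, 0 < c ∧ ∃ N₀ : ℝ, 0 < N₀ ∧
      (∀ N : ℝ, N₀ ≤ N →
        c * N ^ (b' - 3 * b + k - s) ≤
          ∫ q : ℝ × ℝ × ℝ × ℝ,
            (jap q.2.1 ^ k * jap (q.1 - q.2.1 ^ 2) ^ b' *
              (ind N (N + 1) q.2.1 * ind (N ^ 2) (N ^ 2 + 1) q.1) *
              (ind 0 1 q.2.2.2 * ind 0 1 q.2.2.1) *
              (ind N (N + 1) (q.2.1 - q.2.2.2) *
                ind (N ^ 2) (N ^ 2 + 1) (q.1 - q.2.2.1))) /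
            (jap q.2.2.2 ^ k * jap (q.2.2.1 - q.2.2.2 ^ 2) ^ b *
              jap (q.2.1 - q.2.2.2) ^ s *
              jap ((q.1 - q.2.2.1) + (q.2.1 - q.2.2.2) ^ 3) ^ b)) ∧
      (0 < b' - 3 * b + k - s →
        Filter.Tendsto (fun N : ℝ => c * N ^ (b' - 3 * b + k - s))
          Filter.atTop Filter.atTop) := by
  set m₁ : ℝ := min ((1/2:ℝ) ^ b') ((3:ℝ) ^ b') with hm₁def
  have hm₁pos : 0 < m₁ :=
    lt_min (Real.rpow_pos_of_pos (by norm_num) _) (Real.rpow_pos_of_pos (by norm_num) _)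
  set K : ℝ := (2:ℝ) ^ k * max 1 ((2:ℝ) ^ b) * max 1 ((3:ℝ) ^ s) * max 1 ((11:ℝ) ^ b)
    with hKdef
  have hKpos : 0 < K := by
    have h2k : (0:ℝ) < (2:ℝ) ^ k := Real.rpow_pos_of_pos (by norm_num) _
    have hmax2 : (0:ℝ) < max 1 ((2:ℝ) ^ b) := lt_of_lt_of_le one_pos (le_max_left _ _)
    have hmax3 : (0:ℝ) < max 1 ((3:ℝ) ^ s) := lt_of_lt_of_le one_pos (le_max_left _ _)
    have hmax11 : (0:ℝ) < max 1 ((11:ℝ) ^ b) := lt_of_lt_of_le one_pos (le_max_left _ _)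
    exact mul_pos (mul_pos (mul_pos h2k hmax2) hmax3) hmax11
  refine ⟨m₁ / K * (1/64), by positivity, 2, by norm_num, fun N hN => ?_, fun hα => ?_⟩
  · -- the integral bound
    have hN0 : (0:ℝ) < N := by linarith
    have hint := Fint_integrable s k b b' N hN
    set S : Set (ℝ × ℝ × ℝ × ℝ) :=
      Set.Icc (N^2+1/2) (N^2+1) ×ˢ Set.Icc (N+1/2) (N+1) ×ˢ
        Set.Icc (0:ℝ) (1/4) ×ˢ Set.Icc (0:ℝ) (1/4) with hS
    have hSmeas : MeasurableSet S :=
      (measurableSet_Icc.prod (measurableSet_Icc.prod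
        (measurableSet_Icc.prod measurableSet_Icc)))
    have hSfin : volume S < ⊤ :=
      (isCompact_Icc.prod (isCompact_Icc.prod
        (isCompact_Icc.prod isCompact_Icc))).measure_lt_top
    have e1 : (N^2+1 : ℝ) - (N^2+1/2) = 1/2 := by ring
    have e2 : (N+1 : ℝ) - (N+1/2) = 1/2 := by ring
    have e3 : (1/4 : ℝ) - 0 = 1/4 := by ring
    have hvol : volume S = ENNReal.ofReal (1/2) * (ENNReal.ofReal (1/2) *
        (ENNReal.ofReal (1/4) * ENNReal.ofReal (1/4))) := by
      rw [hS]
      rw [show (volume : Measure (ℝ × ℝ × ℝ × ℝ)) =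
          ((volume : Measure ℝ).prod ((volume : Measure ℝ).prod
            ((volume : Measure ℝ).prod (volume : Measure ℝ)))) from rfl]
      rw [Measure.prod_prod, Measure.prod_prod, Measure.prod_prod, Real.volume_Icc,
        Real.volume_Icc, Real.volume_Icc, e1, e2, e3]
    have htoReal : (volume S).toReal = 1/64 := by
      rw [hvol]
      rw [ENNReal.toReal_mul, ENNReal.toReal_mul, ENNReal.toReal_mul,
        ENNReal.toReal_ofReal (by norm_num : (0:ℝ) ≤ 1/2),
        ENNReal.toReal_ofReal (by norm_num : (0:ℝ) ≤ 1/4)]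
      norm_num
    show m₁ / K * (1/64) * N ^ (b' - 3 * b + k - s) ≤ ∫ q, Fint s k b b' N q
    calc m₁ / K * (1/64) * N ^ (b' - 3 * b + k - s)
        = (m₁ / K * N ^ (b' - 3 * b + k - s)) * (volume S).toReal := by
          rw [htoReal]; ring
      _ ≤ ∫ q in S, Fint s k b b' N q :=
          setIntegral_ge_of_const_le_real hSmeas hSfin.ne
            (fun q hq => Fint_key s k b b' N hk hN q hq) hint.integrableOn
      _ ≤ ∫ q, Fint s k b b' N q :=
          setIntegral_le_integral hint
            (Filter.Eventually.of_forall (Fint_nonneg s k b b' N))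
  · -- divergence as N → ∞
    exact (tendsto_rpow_atTop hα).const_mul_atTop (by positivity)
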